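/- Let n ≥ 1 and ν > 0. Suppose a nonnegative continuous function f : ℍⁿ → ℝ attains its maximum at the origin, the limit α := lim_{|ζ|_H→∞} |ζ|_H^ν f(ζ) exists and is positive, β := α^{2/ν} f(0)^{−2/ν}, and for every ξ ∈ ℍⁿ there exists λ(ξ) > 0 such that (λ(ξ)/d_H(ξ,ζ))^ν · f(Φ_{ξ,λ(ξ)}^β(ζ)) = f(ζ) for all ζ ∈ ℍⁿ ∖ {ξ}. Then f(z,t) = α · |t + i|z|² + iβ|^{−ν/2} for all (z,t) ∈ ℍⁿ. -/

import Mathlib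

open Complex Filter Topology MeasureTheory

noncomputable section

/-- The Heisenberg group ℍⁿ as ℂⁿ × ℝ. -/
abbrev Heis (n : ℕ) := (Fin n → ℂ) × ℝ

namespace Heis

variable {n : ℕ}

/-- Hermitian inner product ⟨z,z'⟩ = Σ_j z_j conj(z'_j). -/
def hermInner (z w : Fin n → ℂ) : ℂ := ∑ j, z j * (starRingEnd ℂ) (w j)

/-- Squared Euclidean norm |z|² = Σ_j |z_j|². -/
def nsq (z : Fin n → ℂ) : ℝ := ∑ j, Complex.normSq (z j)

/-- Group law (z,t)·(z',t') = (z+z', t+t'+2 Im⟨z,z'⟩). -/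
def hmul (a b : Heis n) : Heis n :=
  (a.1 + b.1, a.2 + b.2 + 2 * (hermInner a.1 b.1).im)

/-- Group inverse: ζ⁻¹ = −ζ. -/
def hinv (a : Heis n) : Heis n := (-a.1, -a.2)

/-- Korányi norm |(z,t)|_H = (|z|⁴ + t²)^{1/4}. -/
def korNorm (a : Heis n) : ℝ := ((nsq a.1) ^ 2 + a.2 ^ 2) ^ ((1 : ℝ)/4)

/-- Korányi distance d_H(ξ,ζ) = |ζ⁻¹·ξ|_H. -/
def dH (a b : Heis n) : ℝ := korNorm (hmul (hinv b) a)

/-- Open Korányi ball B_λ(ξ). -/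
def ball (ξ : Heis n) (lam : ℝ) : Set (Heis n) := {ζ | dH ξ ζ < lam}

/-- Left translation τ_ξ. -/
def tau (ξ ζ : Heis n) : Heis n := hmul ξ ζ

/-- Dilation δ_λ(z,t) = (λz, λ²t). -/
def dil (lam : ℝ) (a : Heis n) : Heis n := (fun j => (lam : ℂ) * a.1 j, lam ^ 2 * a.2)

/-- Rotation ρ_M(z,t) = (Mz,t). -/
def rot (M : Matrix (Fin n) (Fin n) ℂ) (a : Heis n) : Heis n := (M.mulVec a.1, a.2)

/-- Inversion ι(z,t) = (conj z, −t). -/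
def iota (a : Heis n) : Heis n := (fun j => (starRingEnd ℂ) (a.1 j), -a.2)

/-- w = t + i|z|². -/
def wC (a : Heis n) : ℂ := (a.2 : ℂ) + Complex.I * ((nsq a.1 : ℝ) : ℂ)

/-- CR inversion 𝒥(z,t) = (z/w, −t/|w|²). -/
def crInv (a : Heis n) : Heis n :=
  (fun j => a.1 j / wC a, -a.2 / Complex.normSq (wC a))

/-- Angles θ_k for the rotation matrix M_{ξ,β}. -/
def theta (ξ : Heis n) (β : ℝ) (k : Fin n) : ℝ :=
  if ξ.1 k ≠ 0 then 2 * (ξ.1 k).arg + (wC ξ + Complex.I * (β : ℂ)).arg else 0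

/-- The unitary diagonal matrix M_{ξ,β} = diag(e^{iθ₁},…,e^{iθₙ}). -/
def Mmat (ξ : Heis n) (β : ℝ) : Matrix (Fin n) (Fin n) ℂ :=
  Matrix.diagonal fun k => Complex.exp (Complex.I * ((theta ξ β k : ℝ) : ℂ))

/-- Generalized CR inversion Φ_{ξ,λ}^β = τ_ξ ∘ ρ_{M_{ξ,β}} ∘ δ_{λ²} ∘ 𝒥 ∘ ι ∘ τ_ξ⁻¹. -/
def Phi (ξ : Heis n) (lam β : ℝ) (ζ : Heis n) : Heis n :=
  tau ξ (rot (Mmat ξ β) (dil (lam ^ 2) (crInv (iota (hmul (hinv ξ) ζ)))))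

/-- Direction of the vector field X_j at p. -/
def XVec (j : Fin n) (p : Heis n) : Heis n := (Pi.single j (1 : ℂ), 2 * (p.1 j).im)

/-- Direction of the vector field Y_j at p. -/
def YVec (j : Fin n) (p : Heis n) : Heis n := (Pi.single j Complex.I, -2 * (p.1 j).re)

/-- The vector field X_j acting on functions. -/
def Xop (j : Fin n) (u : Heis n → ℝ) (p : Heis n) : ℝ := fderiv ℝ u p (XVec j p)

/-- The vector field Y_j acting on functions. -/
def Yop (j : Fin n) (u : Heis n → ℝ) (p : Heis n) : ℝ := fderiv ℝ u p (YVec j p)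

/-- Sub-Laplacian Δ_H = Σ_j (X_j² + Y_j²). -/
def subLap (u : Heis n → ℝ) (p : Heis n) : ℝ :=
  ∑ j, (Xop j (Xop j u) p + Yop j (Yop j u) p)

/-- Squared length of the horizontal gradient |∇_H u|² = Σ_j ((X_j u)² + (Y_j u)²). -/
def gradHSq (u : Heis n → ℝ) (p : Heis n) : ℝ :=
  ∑ j, ((Xop j u p) ^ 2 + (Yop j u p) ^ 2)

/-- Generalized Kelvin transform u_{ξ,λ}^β(η) = (λ/d_H(η,ξ))^{Q−2} u(Φ_{ξ,λ}^β(η)), Q−2 = 2n. -/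
def kelvin (u : Heis n → ℝ) (ξ : Heis n) (lam β : ℝ) (η : Heis n) : ℝ :=
  (lam / dH η ξ) ^ (2 * n) * u (Phi ξ lam β η)

/-- The filter |ζ|_H → ∞ on ℍⁿ. -/
def atInftyH (n : ℕ) : Filter (Heis n) := Filter.comap korNorm Filter.atTop

end Heis

/-!
Write `f = α λ^{-ν}`: comparing the decay of `f` along the vertical line through `ξ` with its
value near the pole `ξ` of `Φ_{ξ,λ(ξ)}` gives `λ(ξ)^ν f(ξ) = α`, so the hypotheses become
statements about `λ`. The invariance of `f` then reads `λ(ξ)λ(ζ) = d_H(ξ,ζ) λ(Φ(ζ))`, and the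
maximality of `f(0)` gives `|w(p)| ≤ λ(p)²`, where `w(z,t) = t + i|z|²`. Inserting this into the
explicit form of `w ∘ Φ` shows that along each horizontal line `λ²` lies above the same tangent
lines as the convex function `|w + iβ|`. Two functions with common subgradients differ by a
constant, horizontal lines connect every point to `0`, and at `0` both equal `β`.
-/

open Finset in
/-- For `D = k - T` one has `|D y - D x| ≤ (y - x) (g y - g x)`; summing over a partition of
`[a, b]` into `N` pieces gives `|D b - D a| ≤ (b - a) (g b - g a) / N`. -/
lemma sub_eq_sub_of_common_subgradient {k T g : ℝ → ℝ}
    (hk : ∀ s s', k s + (s' - s) * g s ≤ k s') (hT : ∀ s s', T s + (s' - s) * g s ≤ T s')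
    (a b : ℝ) : k b - T b = k a - T a := by
  set D := fun s => k s - T s
  have hstep : ∀ x y, |D y - D x| ≤ (y - x) * (g y - g x) := by
    intro x y
    have := hk x y; have := hk y x; have := hT x y; have := hT y x
    rw [abs_le]
    constructor <;> linarith
  have hpartition : ∀ N : ℕ, 1 ≤ N → |D b - D a| ≤ (b - a) * (g b - g a) / N := by
    intro N hN
    set s : ℕ → ℝ := fun i => a + i * ((b - a) / N)
    have hs0 : s 0 = a := by simp [s]
    have hsN : s N = b := by simp only [s]; field_simp; ring
    calc |D b - D a| = |∑ i ∈ range N, (D (s (i + 1)) - D (s i))| := by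
          rw [sum_range_sub (fun i => D (s i)), hs0, hsN]
      _ ≤ ∑ i ∈ range N, |D (s (i + 1)) - D (s i)| := abs_sum_le_sum_abs _ _
      _ ≤ ∑ i ∈ range N, (b - a) / N * (g (s (i + 1)) - g (s i)) := by
          refine sum_le_sum fun i _ => (hstep _ _).trans_eq ?_
          simp only [s]
          push_cast
          ring
      _ = (b - a) * (g b - g a) / N := by
          rw [← mul_sum, sum_range_sub (fun i => g (s i)), hs0, hsN]
          ring
  have h0 : |D b - D a| ≤ 0 :=
    ge_of_tendsto (tendsto_const_div_atTop_nhds_zero_nat ((b - a) * (g b - g a)))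
      (eventually_atTop.2 ⟨1, hpartition⟩)
  linarith [abs_nonpos_iff.mp h0]

namespace Heis

variable {n : ℕ}

section Algebra

lemma hermInner_conj (z w : Fin n → ℂ) : starRingEnd ℂ (hermInner z w) = hermInner w z := by
  simp only [hermInner, map_sum, map_mul, Complex.conj_conj]
  exact Finset.sum_congr rfl fun j _ => mul_comm _ _

lemma hermInner_self (z : Fin n → ℂ) : hermInner z z = (nsq z : ℂ) := by
  simp [hermInner, nsq, Complex.mul_conj]

lemma hermInner_self_im (z : Fin n → ℂ) : (hermInner z z).im = 0 := by
  simp [hermInner_self]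

@[simp] lemma hermInner_zero_left (w : Fin n → ℂ) : hermInner 0 w = 0 := by
  simp [hermInner]

@[simp] lemma hermInner_zero_right (z : Fin n → ℂ) : hermInner z 0 = 0 := by
  simp [hermInner]

lemma hermInner_neg_left (z w : Fin n → ℂ) : hermInner (-z) w = -hermInner z w := by
  simp [hermInner]

lemma hermInner_neg_right (z w : Fin n → ℂ) : hermInner z (-w) = -hermInner z w := by
  simp [hermInner]

lemma hermInner_add_left (x y w : Fin n → ℂ) :
    hermInner (x + y) w = hermInner x w + hermInner y w := by
  simp [hermInner, add_mul, Finset.sum_add_distrib]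

lemma hermInner_add_right (z x y : Fin n → ℂ) :
    hermInner z (x + y) = hermInner z x + hermInner z y := by
  simp [hermInner, mul_add, Finset.sum_add_distrib]

lemma hermInner_smul_left (c : ℂ) (z w : Fin n → ℂ) :
    hermInner (c • z) w = c * hermInner z w := by
  simp [hermInner, Finset.mul_sum, mul_assoc]

lemma hermInner_real_smul_right (c : ℝ) (z w : Fin n → ℂ) :
    hermInner z ((c : ℂ) • w) = c * hermInner z w := by
  simp only [hermInner, Pi.smul_apply, smul_eq_mul, map_mul, Complex.conj_ofReal, Finset.mul_sum]
  exact Finset.sum_congr rfl fun _ _ => by ring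

lemma nsq_nonneg (z : Fin n → ℂ) : 0 ≤ nsq z :=
  Finset.sum_nonneg fun _ _ => Complex.normSq_nonneg _

lemma nsq_eq_zero_iff {z : Fin n → ℂ} : nsq z = 0 ↔ z = 0 := by
  simp [nsq, Finset.sum_eq_zero_iff_of_nonneg, Complex.normSq_nonneg, funext_iff]

@[simp] lemma nsq_neg (z : Fin n → ℂ) : nsq (-z) = nsq z := by simp [nsq]

lemma nsq_add (z w : Fin n → ℂ) :
    nsq (z + w) = nsq z + nsq w + 2 * (hermInner z w).re := by
  simp only [nsq, hermInner, Pi.add_apply, Complex.normSq_add, Complex.re_sum,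
    Finset.sum_add_distrib, Finset.mul_sum]

lemma nsq_real_smul (c : ℝ) (z : Fin n → ℂ) : nsq ((c : ℂ) • z) = c ^ 2 * nsq z := by
  simp [nsq, Complex.normSq_mul, Finset.mul_sum, sq]

lemma hmul_assoc (a b c : Heis n) : hmul (hmul a b) c = hmul a (hmul b c) := by
  ext1
  · simp [hmul, add_assoc]
  · simp only [hmul, hermInner_add_left, hermInner_add_right, Complex.add_im]
    ring

@[simp] lemma hmul_zero (a : Heis n) : hmul a 0 = a := by simp [hmul]

@[simp] lemma zero_hmul (a : Heis n) : hmul 0 a = a := by simp [hmul]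

lemma hinv_hmul_self (a : Heis n) : hmul (hinv a) a = 0 := by
  ext1
  · simp [hmul, hinv]
  · simp [hmul, hinv, hermInner_neg_left, hermInner_self_im]

lemma hinv_hmul_cancel_left (a b : Heis n) : hmul (hinv a) (hmul a b) = b := by
  rw [← hmul_assoc, hinv_hmul_self, zero_hmul]

lemma hmul_hinv_cancel_left (a b : Heis n) : hmul a (hmul (hinv a) b) = b := by
  simpa [hinv] using hinv_hmul_cancel_left (hinv a) b

lemma hinv_hmul (a b : Heis n) : hinv (hmul a b) = hmul (hinv b) (hinv a) := by
  ext1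
  · simp [hmul, hinv, add_comm]
  · have h : (hermInner b.1 a.1).im = -(hermInner a.1 b.1).im := by
      rw [← hermInner_conj, Complex.conj_im]
    simp only [hmul, hinv, hermInner_neg_left, hermInner_neg_right, neg_neg, h]
    ring

lemma hinv_hmul_ne_zero {ξ ζ : Heis n} (h : ζ ≠ ξ) : hmul (hinv ξ) ζ ≠ 0 := fun h0 =>
  h (by simpa [hmul_hinv_cancel_left] using congrArg (hmul ξ) h0)

@[simp] lemma wC_re (a : Heis n) : (wC a).re = a.2 := by simp [wC]

@[simp] lemma wC_im (a : Heis n) : (wC a).im = nsq a.1 := by simp [wC]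

lemma wC_eq_zero_iff {a : Heis n} : wC a = 0 ↔ a = 0 := by
  simp [Complex.ext_iff, nsq_eq_zero_iff, Prod.ext_iff, and_comm]

lemma normSq_wC (a : Heis n) : Complex.normSq (wC a) = nsq a.1 ^ 2 + a.2 ^ 2 := by
  simp only [Complex.normSq_apply, wC_re, wC_im]
  ring

lemma wC_hmul (a b : Heis n) :
    wC (hmul a b) = wC a + wC b + 2 * Complex.I * starRingEnd ℂ (hermInner a.1 b.1) := by
  apply Complex.ext <;> simp [hmul, nsq_add, Complex.mul_re, Complex.mul_im]

lemma wC_horizontal (v : Fin n → ℂ) : wC ((v, 0) : Heis n) = Complex.I * (nsq v : ℂ) := by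
  simp [wC]

lemma korNorm_nonneg (a : Heis n) : 0 ≤ korNorm a :=
  Real.rpow_nonneg (by positivity) _

lemma korNorm_sq (a : Heis n) : korNorm a ^ 2 = ‖wC a‖ := by
  have h : (0 : ℝ) ≤ nsq a.1 ^ 2 + a.2 ^ 2 := by positivity
  rw [Complex.norm_def, normSq_wC, korNorm, ← Real.rpow_natCast, ← Real.rpow_mul h,
    Real.sqrt_eq_rpow]
  norm_num

lemma korNorm_pos {a : Heis n} (ha : a ≠ 0) : 0 < korNorm a := by
  have h : 0 < korNorm a ^ 2 := by
    rw [korNorm_sq]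
    exact norm_pos_iff.mpr (wC_eq_zero_iff.not.mpr ha)
  exact (korNorm_nonneg a).lt_of_ne fun h0 => by simp [← h0] at h

@[simp] lemma korNorm_hinv (a : Heis n) : korNorm (hinv a) = korNorm a := by
  simp [korNorm, hinv]

lemma dH_eq_korNorm (ξ ζ : Heis n) : dH ξ ζ = korNorm (hmul (hinv ξ) ζ) := by
  rw [dH, ← korNorm_hinv, hinv_hmul]
  simp [hinv]

end Algebra

section CRInversion

lemma wC_iota (a : Heis n) : wC (iota a) = -starRingEnd ℂ (wC a) := by
  apply Complex.ext <;> simp [iota, nsq]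

lemma wC_crInv (a : Heis n) : wC (crInv a) = -(wC a)⁻¹ := by
  have hnsq : nsq (fun j => a.1 j / wC a) = nsq a.1 / Complex.normSq (wC a) := by
    simp [nsq, Finset.sum_div]
  apply Complex.ext <;> simp [crInv, hnsq, Complex.inv_re, Complex.inv_im, neg_div]

lemma wC_dil (c : ℝ) (a : Heis n) : wC (dil c a) = c ^ 2 * wC a := by
  have h := nsq_real_smul c a.1
  simp only [wC, dil] at h ⊢
  rw [show (fun j => (c : ℂ) * a.1 j) = (c : ℂ) • a.1 from rfl, h]
  push_cast
  ring

lemma Mmat_mulVec_apply (ξ : Heis n) (β : ℝ) (v : Fin n → ℂ) (k : Fin n) :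
    (Mmat ξ β).mulVec v k = Complex.exp (Complex.I * (theta ξ β k : ℂ)) * v k := by
  rw [Mmat, Matrix.mulVec_diagonal]

lemma wC_rot_Mmat (ξ : Heis n) (β : ℝ) (a : Heis n) : wC (rot (Mmat ξ β) a) = wC a := by
  have hnsq : nsq ((Mmat ξ β).mulVec a.1) = nsq a.1 := by
    simp [nsq, Mmat_mulVec_apply, Complex.normSq_eq_norm_sq,
      Complex.norm_exp_I_mul_ofReal]
  simp [wC, rot, hnsq]

lemma exp_two_arg_mul_I_mul_conj (x : ℂ) :
    Complex.exp (2 * x.arg * Complex.I) * starRingEnd ℂ x = x := by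
  rcases eq_or_ne x 0 with rfl | hx
  · simp
  have hnorm : (‖x‖ : ℂ) ≠ 0 := by simpa using hx
  have hexp : Complex.exp (x.arg * Complex.I) = x / ‖x‖ := by
    rw [eq_div_iff hnorm, mul_comm, Complex.norm_mul_exp_arg_mul_I]
  rw [show (2 : ℂ) * x.arg * Complex.I = x.arg * Complex.I + x.arg * Complex.I by ring,
    Complex.exp_add, hexp, div_mul_div_comm, div_mul_eq_mul_div,
    div_eq_iff (mul_ne_zero hnorm hnorm),
    mul_assoc, Complex.mul_conj, Complex.normSq_eq_norm_sq]
  push_cast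
  ring

/-- The angles `θ_k` of `M_{ξ,β}` are chosen precisely to make this hold. -/
lemma exp_theta_mul_conj (ξ : Heis n) (β : ℝ) (hW : wC ξ + Complex.I * β ≠ 0) (k : Fin n) :
    Complex.exp (Complex.I * (theta ξ β k : ℂ)) * starRingEnd ℂ (ξ.1 k)
      = (wC ξ + Complex.I * β) / ‖wC ξ + Complex.I * β‖ * ξ.1 k := by
  set W := wC ξ + Complex.I * β
  by_cases hk : ξ.1 k = 0
  · simp [hk]
  have hexpW : Complex.exp (W.arg * Complex.I) = W / ‖W‖ := by
    rw [eq_div_iff (by simpa using hW), mul_comm, Complex.norm_mul_exp_arg_mul_I]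
  rw [theta, if_pos hk]
  push_cast
  rw [show Complex.I * (2 * (ξ.1 k).arg + W.arg) = 2 * (ξ.1 k).arg * Complex.I + W.arg * Complex.I
    by ring, Complex.exp_add, hexpW, mul_right_comm, exp_two_arg_mul_I_mul_conj, mul_comm]

lemma wC_Phi_hmul_mul_conj (ξ η : Heis n) (lam β : ℝ) (hW : wC ξ + Complex.I * β ≠ 0)
    (hη : η ≠ 0) :
    wC (Phi ξ lam β (hmul ξ η)) * starRingEnd ℂ (wC η)
      = wC ξ * starRingEnd ℂ (wC η) + (lam : ℂ) ^ 4
        - 2 * Complex.I * (lam : ℂ) ^ 2 * ((wC ξ + Complex.I * β) / ‖wC ξ + Complex.I * β‖)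
          * hermInner ξ.1 η.1 := by
  set W := wC ξ + Complex.I * β
  set R := rot (Mmat ξ β) (dil (lam ^ 2) (crInv (iota η)))
  have hwη : starRingEnd ℂ (wC η) ≠ 0 := by simpa [wC_eq_zero_iff] using hη
  have hwι : wC (iota η) = -starRingEnd ℂ (wC η) := wC_iota η
  have hwR : wC R = (lam : ℂ) ^ 4 * (starRingEnd ℂ (wC η))⁻¹ := by
    rw [wC_rot_Mmat, wC_dil, wC_crInv, hwι]
    push_cast
    ring
  have hR : hermInner R.1 ξ.1
      = -((lam : ℂ) ^ 2 * (W / ‖W‖) * hermInner ξ.1 η.1) / starRingEnd ℂ (wC η) := by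
    simp only [hermInner, Finset.mul_sum, Finset.sum_div, ← Finset.sum_neg_distrib]
    refine Finset.sum_congr rfl fun k _ => ?_
    have hRk : R.1 k = Complex.exp (Complex.I * (theta ξ β k : ℂ))
        * ((lam : ℂ) ^ 2 * (starRingEnd ℂ (η.1 k) / wC (iota η))) := by
      simp [R, rot, Mmat_mulVec_apply, dil, crInv, iota]
    rw [hRk, hwι]
    linear_combination (lam : ℂ) ^ 2 * starRingEnd ℂ (η.1 k) / (-starRingEnd ℂ (wC η))
      * exp_theta_mul_conj ξ β hW k
  rw [Phi, hinv_hmul_cancel_left, tau, wC_hmul, hermInner_conj, hwR, hR]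
  field_simp
  ring

end CRInversion

section Vertical

lemma hmul_vertical (ξ : Heis n) (R : ℝ) : hmul ξ ((0 : Fin n → ℂ), R) = (ξ.1, ξ.2 + R) := by
  simp [hmul]

lemma korNorm_vertical {R : ℝ} (hR : 0 ≤ R) : korNorm ((0 : Fin n → ℂ), R) = √R := by
  have h0 : nsq (0 : Fin n → ℂ) = 0 := by simp [nsq]
  rw [korNorm, h0, Real.sqrt_eq_rpow, zero_pow two_ne_zero, zero_add, ← Real.rpow_natCast,
    ← Real.rpow_mul hR]
  norm_num

lemma Phi_hmul_vertical (ξ : Heis n) (lam β : ℝ) {R : ℝ} (hR : R ≠ 0) :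
    Phi ξ lam β (hmul ξ ((0 : Fin n → ℂ), R)) = hmul ξ ((0 : Fin n → ℂ), lam ^ 4 / R) := by
  have hι : iota ((0 : Fin n → ℂ), R) = (0, -R) := by
    simp [iota, Prod.ext_iff, funext_iff]
  have hw : wC ((0 : Fin n → ℂ), -R) = -R := by simp [wC, nsq]
  rw [Phi, hinv_hmul_cancel_left, tau, hι]
  congr 1
  ext1
  · ext k
    simp [rot, dil, crInv, Mmat_mulVec_apply]
  · simp only [rot, dil, crInv, hw, Complex.normSq_neg, Complex.normSq_ofReal]
    field_simp

lemma tendsto_korNorm_vertical_div_sqrt (z : Fin n → ℂ) (t : ℝ) :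
    Tendsto (fun R => korNorm ((z, t + R) : Heis n) / √R) atTop (𝓝 1) := by
  have hq : Tendsto (fun R : ℝ => (nsq z ^ 2 + (t + R) ^ 2) / R ^ 2) atTop (𝓝 1) := by
    have hg : Tendsto (fun x : ℝ => nsq z ^ 2 * x ^ 2 + (t * x + 1) ^ 2) (𝓝 0) (𝓝 1) := by
      simpa using
        (by fun_prop : Continuous fun x : ℝ => nsq z ^ 2 * x ^ 2 + (t * x + 1) ^ 2).tendsto 0
    refine (hg.comp tendsto_inv_atTop_zero).congr' ?_
    filter_upwards [eventually_gt_atTop 0] with R hR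
    rw [Function.comp_apply, eq_div_iff (by positivity)]
    field_simp
  have h4 := (Real.continuousAt_rpow_const 1 (1 / 4) (Or.inl one_ne_zero)).tendsto.comp hq
  rw [Real.one_rpow] at h4
  refine h4.congr' ?_
  filter_upwards [eventually_gt_atTop 0] with R hR
  rw [Function.comp_apply, Real.div_rpow (by positivity) (by positivity), Real.sqrt_eq_rpow,
    ← Real.rpow_natCast R 2, ← Real.rpow_mul hR.le, korNorm]
  norm_num

lemma tendsto_vertical_atInftyH (p : Heis n) :
    Tendsto (fun R => ((p.1, p.2 + R) : Heis n)) atTop (atInftyH n) := by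
  rw [atInftyH, tendsto_comap_iff]
  have h : Tendsto (fun R : ℝ => nsq p.1 ^ 2 + (p.2 + R) ^ 2) atTop atTop :=
    tendsto_atTop_add_const_left _ _
      ((tendsto_pow_atTop two_ne_zero).comp (tendsto_atTop_add_const_left _ _ tendsto_id))
  exact (tendsto_rpow_atTop (by norm_num : (0 : ℝ) < 1 / 4)).comp h

/-- Comparing the decay of `f` along the vertical line through `ξ` with the value of `f` at
`Φ_{ξ,λ}(ξ · (0, R)) = ξ · (0, λ⁴ / R) → ξ`. -/
lemma eq_rpow_mul_of_inversion_invariant {ν : ℝ} {f : Heis n → ℝ} (hcont : Continuous f)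
    {α : ℝ} (hlim : Tendsto (fun ζ => korNorm ζ ^ ν * f ζ) (atInftyH n) (𝓝 α))
    {β lam : ℝ} {ξ : Heis n} (hlam : 0 < lam)
    (heq : ∀ ζ : Heis n, ζ ≠ ξ → (lam / dH ξ ζ) ^ ν * f (Phi ξ lam β ζ) = f ζ) :
    α = lam ^ ν * f ξ := by
  set ζ : ℝ → Heis n := fun R => (ξ.1, ξ.2 + R)
  have hrewrite : ∀ᶠ R in atTop, korNorm (ζ R) ^ ν * f (ζ R)
      = (korNorm (ζ R) / √R * lam) ^ ν * f (ξ.1, ξ.2 + lam ^ 4 / R) := by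
    filter_upwards [eventually_gt_atTop 0] with R hR
    have hζ : ζ R = hmul ξ ((0 : Fin n → ℂ), R) := (hmul_vertical ξ R).symm
    have hne : ζ R ≠ ξ := fun h => hR.ne' (by simpa [ζ] using congrArg Prod.snd h)
    have h := heq (ζ R) hne
    rw [dH_eq_korNorm, hζ, hinv_hmul_cancel_left, korNorm_vertical hR.le,
      Phi_hmul_vertical ξ lam β hR.ne', hmul_vertical, ← hζ] at h
    rw [← h, ← mul_assoc, ← Real.mul_rpow (korNorm_nonneg _) (by positivity)]
    ring_nf
  have hf : Tendsto (fun R : ℝ => f (ξ.1, ξ.2 + lam ^ 4 / R)) atTop (𝓝 (f ξ)) := by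
    have h : Tendsto (fun R : ℝ => ξ.2 + lam ^ 4 / R) atTop (𝓝 ξ.2) := by
      simpa using (tendsto_const_nhds (x := ξ.2)).add
        ((tendsto_const_nhds (x := lam ^ 4)).div_atTop tendsto_id)
    exact (hcont.tendsto ξ).comp (tendsto_const_nhds.prodMk_nhds h)
  have hbase : Tendsto (fun R => korNorm (ζ R) / √R * lam) atTop (𝓝 lam) := by
    simpa using (tendsto_korNorm_vertical_div_sqrt ξ.1 ξ.2).mul_const lam
  have hpow := (Real.continuousAt_rpow_const lam ν (Or.inl hlam.ne')).tendsto.comp hbase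
  exact tendsto_nhds_unique ((hlim.comp (tendsto_vertical_atInftyH ξ)).congr' hrewrite)
    (hpow.mul hf)

end Vertical

section Horizontal

/-- Half the derivative of `‖w(ξ · (s v, 0)) + iβ‖` at `s = 0`. -/
def horizontalSlope (β : ℝ) (ξ : Heis n) (v : Fin n → ℂ) : ℝ :=
  ((wC ξ + Complex.I * β) * hermInner ξ.1 v).im / ‖wC ξ + Complex.I * β‖

def HasHorizontalSubgradient (β : ℝ) (F : Heis n → ℝ) : Prop :=
  ∀ ξ v, F ξ + 2 * horizontalSlope β ξ v ≤ F (hmul ξ (v, 0))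

lemma horizontalSlope_real_smul (β : ℝ) (ξ : Heis n) (c : ℝ) (v : Fin n → ℂ) :
    horizontalSlope β ξ ((c : ℂ) • v) = c * horizontalSlope β ξ v := by
  simp only [horizontalSlope, hermInner_real_smul_right, mul_left_comm _ (c : ℂ),
    Complex.im_ofReal_mul, mul_div_assoc]

lemma hmul_horizontal_real_smul (ξ : Heis n) (u : Fin n → ℂ) (s s' : ℝ) :
    hmul (hmul ξ ((s : ℂ) • u, 0)) (((s' - s : ℝ) : ℂ) • u, 0) = hmul ξ ((s' : ℂ) • u, 0) := by
  have h : hmul (((s : ℂ) • u, 0) : Heis n) (((s' - s : ℝ) : ℂ) • u, 0) = ((s' : ℂ) • u, 0) := by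
    ext1
    · rw [hmul, ← add_smul]
      push_cast
      ring_nf
    · simp only [hmul]
      rw [hermInner_smul_left, hermInner_real_smul_right, hermInner_self]
      simp
  rw [hmul_assoc, h]

lemma HasHorizontalSubgradient.sub_hmul_horizontal {β : ℝ} {F G : Heis n → ℝ}
    (hF : HasHorizontalSubgradient β F) (hG : HasHorizontalSubgradient β G)
    (ξ : Heis n) (v : Fin n → ℂ) : F (hmul ξ (v, 0)) - G (hmul ξ (v, 0)) = F ξ - G ξ := by
  have hline : ∀ H : Heis n → ℝ, HasHorizontalSubgradient β H → ∀ s s' : ℝ,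
      H (hmul ξ ((s : ℂ) • v, 0)) + (s' - s) * (2 * horizontalSlope β (hmul ξ ((s : ℂ) • v, 0)) v)
        ≤ H (hmul ξ ((s' : ℂ) • v, 0)) := by
    intro H hH s s'
    have h := hH (hmul ξ ((s : ℂ) • v, 0)) (((s' - s : ℝ) : ℂ) • v)
    rwa [hmul_horizontal_real_smul, horizontalSlope_real_smul, mul_left_comm] at h
  simpa [Prod.mk_zero_zero] using sub_eq_sub_of_common_subgradient (hline F hF) (hline G hG) 0 1

lemma hasHorizontalSubgradient_norm_wC_add {β : ℝ} (hβ : 0 ≤ β) :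
    HasHorizontalSubgradient β (fun p : Heis n => ‖wC p + Complex.I * β‖) := by
  intro ξ v
  set W := wC ξ + Complex.I * β
  set h := hermInner ξ.1 v
  show ‖W‖ + 2 * ((W * h).im / ‖W‖) ≤ ‖wC (hmul ξ (v, 0)) + Complex.I * β‖
  rcases eq_or_ne W 0 with hW | hW
  · simp [hW]
  have hW' : wC (hmul ξ (v, 0)) + Complex.I * β
      = W + Complex.I * (nsq v : ℂ) + 2 * Complex.I * starRingEnd ℂ h := by
    rw [wC_hmul, wC_horizontal]
    ring
  have hre : ((wC (hmul ξ (v, 0)) + Complex.I * β) * starRingEnd ℂ W).re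
      = ‖W‖ ^ 2 + nsq v * (nsq ξ.1 + β) + 2 * (W * h).im := by
    rw [hW', ← Complex.normSq_eq_norm_sq, Complex.normSq_apply]
    simp only [W, map_add, map_mul, Complex.conj_I, Complex.conj_ofReal, Complex.conj_re,
      Complex.conj_im, Complex.add_re, Complex.add_im, Complex.mul_re, Complex.mul_im,
      Complex.neg_re, Complex.neg_im, Complex.I_re, Complex.I_im, Complex.ofReal_re,
      Complex.ofReal_im, Complex.re_ofNat, Complex.im_ofNat, wC_re, wC_im]
    ring
  have hle := (Complex.re_le_norm _).trans_eq
    (by rw [norm_mul, Complex.norm_conj] : ‖(wC (hmul ξ (v, 0)) + Complex.I * β)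
      * starRingEnd ℂ W‖ = ‖wC (hmul ξ (v, 0)) + Complex.I * β‖ * ‖W‖)
  have hWpos : 0 < ‖W‖ := norm_pos_iff.mpr hW
  have hnonneg : 0 ≤ nsq v * (nsq ξ.1 + β) :=
    mul_nonneg (nsq_nonneg v) (by linarith [nsq_nonneg ξ.1])
  refine le_of_mul_le_mul_left ?_ hWpos
  have hexpand : ‖W‖ * (‖W‖ + 2 * ((W * h).im / ‖W‖)) = ‖W‖ ^ 2 + 2 * (W * h).im := by
    field_simp
  rw [hexpand]
  linarith

lemma eq_apply_zero_of_hmul_horizontal_invariant (hn : 1 ≤ n) {D : Heis n → ℝ}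
    (hD : ∀ ξ v, D (hmul ξ (v, 0)) = D ξ) (p : Heis n) : D p = D 0 := by
  have hreach : ∀ z : Fin n → ℂ, z ≠ 0 → ∀ t, D (z, t) = D 0 := by
    intro z hz t
    have hnsq : nsq z ≠ 0 := nsq_eq_zero_iff.not.mpr hz
    set r := t / (2 * nsq z)
    set b : Fin n → ℂ := ((r : ℂ) * Complex.I) • z
    have hb : 2 * (hermInner b z).im = t := by
      simp only [b, hermInner_smul_left, hermInner_self, Complex.mul_im, Complex.I_re,
        Complex.I_im, Complex.ofReal_re, Complex.ofReal_im, r]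
      field_simp
      ring
    have hpath : ((z, t) : Heis n) = hmul (hmul 0 (b, 0)) (z - b, 0) := by
      rw [zero_hmul]
      ext1
      · simp [hmul]
      · simp only [hmul, sub_eq_add_neg, add_neg_cancel_comm_assoc, add_zero,
          hermInner_add_right, hermInner_neg_right, Complex.add_im, Complex.neg_im,
          hermInner_self_im, neg_zero, zero_add]
        linarith
    rw [hpath, hD, hD]
  obtain ⟨z, t⟩ := p
  rcases eq_or_ne z 0 with rfl | hz
  · set e : Fin n → ℂ := Pi.single ⟨0, hn⟩ 1
    have he : e ≠ 0 := by simp [e]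
    have hpath : ((0, t) : Heis n) = hmul (e, t) (-e, 0) := by
      ext1 <;> simp [hmul, hermInner_neg_right, hermInner_self_im]
    rw [hpath, hD, hreach e he]
  · exact hreach z hz t

lemma re_wC_Phi_hmul_horizontal_mul_conj (ξ : Heis n) (lam β : ℝ)
    (hW : wC ξ + Complex.I * β ≠ 0) {v : Fin n → ℂ} (hv : v ≠ 0) :
    (wC (Phi ξ lam β (hmul ξ (v, 0))) * starRingEnd ℂ (wC ((v, 0) : Heis n))).re
      = lam ^ 4 + nsq v * nsq ξ.1 + 2 * lam ^ 2 * horizontalSlope β ξ v := by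
  have hnorm : (‖wC ξ + Complex.I * β‖ : ℂ) ≠ 0 := by simpa using hW
  rw [wC_Phi_hmul_mul_conj ξ (v, 0) lam β hW (by simpa [Prod.ext_iff] using hv), wC_horizontal,
    horizontalSlope]
  simp only [map_mul, Complex.conj_I, Complex.conj_ofReal, ← Complex.ofReal_pow, Complex.sub_re,
    Complex.add_re, Complex.neg_re, Complex.mul_re, Complex.mul_im, Complex.add_im, Complex.neg_im,
    Complex.div_re, Complex.div_im, Complex.I_re, Complex.I_im, Complex.ofReal_re,
    Complex.ofReal_im, Complex.re_ofNat, Complex.im_ofNat, Complex.normSq_ofReal, wC_re, wC_im]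
  field_simp
  ring

end Horizontal

section InversionRelation

variable {β : ℝ} {lam : Heis n → ℝ}

lemma inversion_relation_of_eq_div_rpow {ν α : ℝ} (hν : ν ≠ 0) (hα : α ≠ 0) {f : Heis n → ℝ}
    (hpos : ∀ p, 0 < lam p) (hf : ∀ p, f p = α / lam p ^ ν) {ξ ζ : Heis n} (hne : ζ ≠ ξ)
    (h : (lam ξ / dH ξ ζ) ^ ν * f (Phi ξ (lam ξ) β ζ) = f ζ) :
    lam ξ * lam ζ = dH ξ ζ * lam (Phi ξ (lam ξ) β ζ) := by
  have hd : 0 < dH ξ ζ := by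
    rw [dH_eq_korNorm]
    exact korNorm_pos (hinv_hmul_ne_zero hne)
  have hpow : ∀ p, lam p ^ ν ≠ 0 := fun p => (Real.rpow_pos_of_pos (hpos p) ν).ne'
  rw [hf, hf, Real.div_rpow (hpos ξ).le hd.le] at h
  refine Real.rpow_left_injOn hν (mul_pos (hpos ξ) (hpos ζ)).le (mul_pos hd (hpos _)).le ?_
  simp only [Real.mul_rpow (hpos ξ).le (hpos ζ).le, Real.mul_rpow hd.le (hpos _).le]
  field_simp at h
  rw [div_eq_div_iff (hpow _) (hpow _)] at h
  linear_combination h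

lemma korNorm_le_of_inversion_relation (hpos : ∀ p, 0 < lam p) (hmin : ∀ p, lam 0 ≤ lam p)
    (hrel : ∀ ξ ζ, ζ ≠ ξ → lam ξ * lam ζ = dH ξ ζ * lam (Phi ξ (lam ξ) β ζ)) (p : Heis n) :
    korNorm p ≤ lam p := by
  rcases eq_or_ne p 0 with rfl | hp
  · simpa [korNorm, nsq] using (hpos 0).le
  have h := hrel 0 p hp
  rw [dH_eq_korNorm, show hinv (0 : Heis n) = 0 by ext1 <;> simp [hinv], zero_hmul] at h
  have := mul_le_mul_of_nonneg_left (hmin (Phi 0 (lam 0) β p)) (korNorm_nonneg p)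
  nlinarith [hpos 0]

lemma hasHorizontalSubgradient_sq_of_inversion_relation (hβ : 0 < β) (hpos : ∀ p, 0 < lam p)
    (hrel : ∀ ξ ζ, ζ ≠ ξ → lam ξ * lam ζ = dH ξ ζ * lam (Phi ξ (lam ξ) β ζ))
    (hlow : ∀ p, ‖wC p‖ ≤ lam p ^ 2) :
    HasHorizontalSubgradient β (fun p => lam p ^ 2) := by
  intro ξ v
  rcases eq_or_ne v 0 with rfl | hv
  · simp [horizontalSlope, Prod.mk_zero_zero]
  set ζ := hmul ξ (v, 0)
  set Φζ := Phi ξ (lam ξ) β ζ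
  have hne : ζ ≠ ξ := fun h => hv (by
    simpa [ζ, hinv_hmul_cancel_left, hinv_hmul_self, Prod.ext_iff] using congrArg (hmul (hinv ξ)) h)
  have hW : wC ξ + Complex.I * β ≠ 0 := fun h => by
    have := congrArg Complex.im h
    simp only [Complex.add_im, wC_im, Complex.mul_im, Complex.I_re, Complex.I_im,
      Complex.ofReal_re, Complex.ofReal_im, Complex.zero_im] at this
    linarith [nsq_nonneg ξ.1]
  have hsq : lam ξ ^ 2 * lam ζ ^ 2 = ‖wC ((v, 0) : Heis n)‖ * lam Φζ ^ 2 := by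
    rw [← mul_pow, hrel ξ ζ hne, mul_pow, dH_eq_korNorm, korNorm_sq, hinv_hmul_cancel_left]
  have hbound : lam ξ ^ 4 + nsq v * nsq ξ.1 + 2 * lam ξ ^ 2 * horizontalSlope β ξ v
      ≤ lam ξ ^ 2 * lam ζ ^ 2 := by
    rw [← re_wC_Phi_hmul_horizontal_mul_conj ξ (lam ξ) β hW hv, hsq]
    refine (Complex.re_le_norm _).trans ?_
    rw [norm_mul, Complex.norm_conj, mul_comm]
    exact mul_le_mul_of_nonneg_left (hlow Φζ) (norm_nonneg _)
  have hξ := pow_pos (hpos ξ) 2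
  refine le_of_mul_le_mul_left ?_ hξ
  nlinarith [mul_nonneg (nsq_nonneg v) (nsq_nonneg ξ.1)]

theorem sq_eq_norm_wC_add_of_inversion_relation (hn : 1 ≤ n) (hpos : ∀ p, 0 < lam p)
    (hmin : ∀ p, lam 0 ≤ lam p) (hβ : β = lam 0 ^ 2)
    (hrel : ∀ ξ ζ, ζ ≠ ξ → lam ξ * lam ζ = dH ξ ζ * lam (Phi ξ (lam ξ) β ζ)) (p : Heis n) :
    lam p ^ 2 = ‖wC p + Complex.I * β‖ := by
  have hβpos : 0 < β := hβ ▸ pow_pos (hpos 0) 2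
  have hlow : ∀ p, ‖wC p‖ ≤ lam p ^ 2 := fun p => by
    rw [← korNorm_sq]
    exact pow_le_pow_left₀ (korNorm_nonneg p) (korNorm_le_of_inversion_relation hpos hmin hrel p) 2
  have hD := (hasHorizontalSubgradient_sq_of_inversion_relation hβpos hpos hrel
    hlow).sub_hmul_horizontal (hasHorizontalSubgradient_norm_wC_add hβpos.le)
  have h := eq_apply_zero_of_hmul_horizontal_invariant hn
    (D := fun p => lam p ^ 2 - ‖wC p + Complex.I * β‖) hD p
  have hw0 : wC (0 : Heis n) = 0 := wC_eq_zero_iff.mpr rfl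
  simp only [hw0, zero_add, norm_mul, Complex.norm_I, Complex.norm_real, Real.norm_eq_abs,
    abs_of_pos hβpos, ← hβ, one_mul, sub_self] at h
  linarith

end InversionRelation

end Heis

open Heis

theorem calculus_lemma_II_general (n : ℕ) (hn : 1 ≤ n) (ν : ℝ) (hν : 0 < ν)
    (f : Heis n → ℝ) (hcont : Continuous f)
    (hmax : ∀ p, f p ≤ f 0)
    (α : ℝ) (hα : 0 < α)
    (hlim : Tendsto (fun ζ => korNorm ζ ^ ν * f ζ) (atInftyH n) (nhds α))
    (β : ℝ) (hβ : β = α ^ (2 / ν) * f 0 ^ (-(2 / ν)))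
    (h : ∀ ξ : Heis n, ∃ lam : ℝ, 0 < lam ∧
      ∀ ζ : Heis n, ζ ≠ ξ → (lam / dH ξ ζ) ^ ν * f (Phi ξ lam β ζ) = f ζ) :
    ∀ (z : Fin n → ℂ) (t : ℝ),
      f (z, t) = α * ‖(t : ℂ) + Complex.I * ((nsq z : ℝ) : ℂ)
        + Complex.I * (β : ℂ)‖ ^ (-ν / 2) := by
  choose lam hlam_pos hlam using h
  have hlamν : ∀ ξ, 0 < lam ξ ^ ν := fun ξ => Real.rpow_pos_of_pos (hlam_pos ξ) ν
  have hf : ∀ ξ, f ξ = α / lam ξ ^ ν := fun ξ => by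
    rw [eq_rpow_mul_of_inversion_invariant hcont hlim (hlam_pos ξ) (hlam ξ),
      mul_div_cancel_left₀ _ (hlamν ξ).ne']
  have hmin : ∀ p, lam 0 ≤ lam p := fun p => by
    have h := hmax p
    rwa [hf, hf, div_le_div_iff_of_pos_left hα (hlamν p) (hlamν 0),
      Real.rpow_le_rpow_iff (hlam_pos 0).le (hlam_pos p).le hν] at h
  have hβ0 : β = lam 0 ^ 2 := by
    rw [hβ, hf 0, Real.rpow_neg (div_pos hα (hlamν 0)).le, Real.div_rpow hα.le (hlamν 0).le,
      inv_div, ← Real.rpow_mul (hlam_pos 0).le, mul_div_cancel₀ _ hν.ne',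
      mul_div_cancel₀ _ (Real.rpow_pos_of_pos hα _).ne', Real.rpow_two]
  have hrel : ∀ ξ ζ, ζ ≠ ξ → lam ξ * lam ζ = dH ξ ζ * lam (Phi ξ (lam ξ) β ζ) := fun ξ ζ hne =>
    inversion_relation_of_eq_div_rpow hν.ne' hα.ne' hlam_pos hf hne (hlam ξ ζ hne)
  intro z t
  rw [hf, show (t : ℂ) + Complex.I * (nsq z : ℂ) = wC (z, t) from rfl,
    ← sq_eq_norm_wC_add_of_inversion_relation hn hlam_pos hmin hβ0 hrel, ← Real.rpow_natCast,
    ← Real.rpow_mul (hlam_pos _).le, div_eq_mul_inv, ← Real.rpow_neg (hlam_pos _).le]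
  ring_nf

/-- Calculus Lemma II of Li–Nirenberg–Zhu type. -/
theorem calculus_lemma_II (n : ℕ) (hn : 1 ≤ n) (ν : ℝ) (hν : 0 < ν)
    (f : Heis n → ℝ) (hcont : Continuous f) (hnonneg : ∀ p, 0 ≤ f p)
    (hmax : ∀ p, f p ≤ f 0)
    (α : ℝ) (hα : 0 < α)
    (hlim : Tendsto (fun ζ => korNorm ζ ^ ν * f ζ) (atInftyH n) (nhds α))
    (β : ℝ) (hβ : β = α ^ (2 / ν) * f 0 ^ (-(2 / ν)))
    (h : ∀ ξ : Heis n, ∃ lam : ℝ, 0 < lam ∧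
      ∀ ζ : Heis n, ζ ≠ ξ → (lam / dH ξ ζ) ^ ν * f (Phi ξ lam β ζ) = f ζ) :
    ∀ (z : Fin n → ℂ) (t : ℝ),
      f (z, t) = α * ‖(t : ℂ) + Complex.I * ((nsq z : ℝ) : ℂ)
        + Complex.I * (β : ℂ)‖ ^ (-ν / 2) :=
  calculus_lemma_II_general n hn ν hν f hcont hmax α hα hlim β hβ h
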